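/- Let N ≥ 1 and suppose (D_k)_{k≥0} are N×N real symmetric matrices and (E_k)_{k≥0} are N×N real matrices such that for some κ ≥ 1, δ ∈ [0,1), and θ ∈ [0,(1−δ)/2], one has ‖D_k − κ·I‖ ≤ κδ and ‖E_k‖ ≤ κθ for all k ≥ 0. Define recursively Q_0 = D_0 and Q_k = D_k − E_{k−1}Q_{k−1}^{−1}E_{k−1}ᵀ for k ≥ 1. Then every Q_k is invertible (so the recursion is well-defined) and, with ε = (1+δ)/2 − √((1−δ)²/4 − θ²), one has ε < 1 and ‖Q_k − κ·I‖ ≤ κε for all k ≥ 0. -/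

import Mathlib

open Matrix

/-- Euclidean (ℓ²) norm of a vector in ℝ^n. -/
noncomputable def vecNorm {n : Type*} [Fintype n] (v : n → ℝ) : ℝ :=
  Real.sqrt (∑ i, v i ^ 2)

/-- Spectral norm (largest singular value) of a real matrix, defined as the operator
norm: the supremum of `‖A x‖₂` over unit vectors `x`. -/
noncomputable def matSpectralNorm {m n : Type*} [Fintype m] [Fintype n]
    (A : Matrix m n ℝ) : ℝ :=
  sSup ((fun x => vecNorm (A.mulVec x)) '' {x | vecNorm x = 1})

/-- The recursion `Q₀ = D₀`, `Q_{k+1} = D_{k+1} − E_k Q_k⁻¹ E_kᵀ`, stated with the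
(total) matrix inverse; the invertibility of each `Q_k` is part of the claim below. -/
noncomputable def Qrec {N : ℕ} (D E : ℕ → Matrix (Fin N) (Fin N) ℝ) :
    ℕ → Matrix (Fin N) (Fin N) ℝ
  | 0 => D 0
  | k + 1 => D (k + 1) - E k * (Qrec D E k)⁻¹ * (E k)ᵀ

/-! If `‖Q - κI‖ ≤ κε` with `ε < 1`, the Neumann series for `κ⁻¹Q = 1 - (1 - κ⁻¹Q)` shows that `Q`
is invertible with `‖Q⁻¹‖ ≤ (κ(1 - ε))⁻¹`. Hence one step of the recursion gives
`‖Q' - κI‖ ≤ κδ + (κθ)² / (κ(1 - ε)) = κ(δ + θ² / (1 - ε))`, and the `ε` of the statement is a fixed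
point of `x ↦ δ + θ² / (1 - x)`, so the bound `κε` propagates by induction from
`‖Q₀ - κI‖ ≤ κδ ≤ κε`. -/

open scoped Matrix.Norms.L2Operator

theorem IsUnit.smul_of_ne_zero {𝕜 R : Type*} [Field 𝕜] [Ring R] [Algebra 𝕜 R] {c : 𝕜}
    (hc : c ≠ 0) {x : R} (hx : IsUnit x) : IsUnit (c • x) := by
  simpa only [Units.smul_def, Units.val_mk0] using hx.smul (Units.mk0 c hc)

theorem Ring.inverse_smul_of_isUnit {𝕜 R : Type*} [Field 𝕜] [Ring R] [Algebra 𝕜 R] {c : 𝕜}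
    (hc : c ≠ 0) {x : R} (hx : IsUnit x) : Ring.inverse (c • x) = c⁻¹ • Ring.inverse x := by
  rw [← mul_one (Ring.inverse (c • x)),
    Ring.inverse_mul_eq_iff_eq_mul _ _ _ (hx.smul_of_ne_zero hc), smul_mul_smul,
    mul_inv_cancel₀ hc, Ring.mul_inverse_cancel x hx, one_smul]

theorem NormedRing.norm_inverse_one_sub_le {R : Type*} [NormedRing R] [HasSummableGeomSeries R]
    {t : R} (ht : ‖t‖ < 1) : ‖Ring.inverse (1 - t)‖ ≤ ‖(1 : R)‖ - 1 + (1 - ‖t‖)⁻¹ := by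
  rw [NormedRing.inverse_one_sub t ht]
  exact tsum_geometric_le_of_norm_lt_one t ht

theorem isUnit_and_norm_inverse_le_of_norm_sub_smul_one_le {R : Type*} [NormedRing R]
    [NormedAlgebra ℝ R] [HasSummableGeomSeries R] (h1 : ‖(1 : R)‖ ≤ 1) {a : R} {κ ε : ℝ}
    (hκ : 0 < κ) (hε : ε < 1) (ha : ‖a - κ • 1‖ ≤ κ * ε) :
    IsUnit a ∧ ‖Ring.inverse a‖ ≤ (κ * (1 - ε))⁻¹ := by
  set t : R := κ⁻¹ • (κ • 1 - a) with ht_def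
  have ht : ‖t‖ ≤ ε := by
    rw [ht_def, norm_smul, norm_inv, Real.norm_of_nonneg hκ.le, norm_sub_rev,
      inv_mul_le_iff₀ hκ]
    exact ha
  have ht1 : ‖t‖ < 1 := ht.trans_lt hε
  have ha_eq : a = κ • (1 - t) := by
    rw [ht_def, smul_sub, smul_smul, mul_inv_cancel₀ hκ.ne', one_smul, sub_sub_cancel]
  have hunit : IsUnit (1 - t) := (Units.oneSub t ht1).isUnit
  have hinv : ‖Ring.inverse (1 - t)‖ ≤ (1 - ε)⁻¹ := calc
    _ ≤ ‖(1 : R)‖ - 1 + (1 - ‖t‖)⁻¹ := NormedRing.norm_inverse_one_sub_le ht1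
    _ ≤ (1 - ε)⁻¹ := by
      have : (1 - ‖t‖)⁻¹ ≤ (1 - ε)⁻¹ := by gcongr
      linarith
  refine ⟨ha_eq ▸ hunit.smul_of_ne_zero hκ.ne', ?_⟩
  rw [ha_eq, Ring.inverse_smul_of_isUnit hκ.ne' hunit, norm_smul, norm_inv,
    Real.norm_of_nonneg hκ.le, mul_inv]
  gcongr

theorem vecNorm_eq_norm_toLp {n : Type*} [Fintype n] (v : n → ℝ) :
    vecNorm v = ‖WithLp.toLp 2 v‖ := by
  simp [vecNorm, EuclideanSpace.norm_eq, sq_abs]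

theorem matSpectralNorm_eq_l2_opNorm {m n : Type*} [Fintype m] [Fintype n] [DecidableEq n]
    (A : Matrix m n ℝ) : matSpectralNorm A = ‖A‖ := by
  rw [l2_opNorm_def, ← ContinuousLinearMap.sSup_sphere_eq_norm, matSpectralNorm]
  simp only [vecNorm_eq_norm_toLp]
  congr 1
  ext r
  simp only [Set.mem_image, Set.mem_ofPred_eq, mem_sphere_zero_iff_norm]
  exact ⟨fun ⟨x, hx, hr⟩ => ⟨WithLp.toLp 2 x, hx, hr⟩, fun ⟨x, hx, hr⟩ => ⟨x.ofLp, hx, hr⟩⟩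

namespace Matrix

variable {m n : Type*} [Fintype m] [Fintype n] [DecidableEq n]

theorem l2_opNorm_transpose [DecidableEq m] (A : Matrix m n ℝ) : ‖Aᵀ‖ = ‖A‖ := by
  rw [← conjTranspose_eq_transpose_of_trivial, l2_opNorm_conjTranspose]

theorem l2_opNorm_one_le : ‖(1 : Matrix n n ℝ)‖ ≤ 1 := by
  rw [cstar_norm_def, map_one]
  exact ContinuousLinearMap.norm_id_le

theorem l2_opNorm_mul_mul_transpose_le [DecidableEq m] (E : Matrix m n ℝ) (B : Matrix n n ℝ) :
    ‖E * B * Eᵀ‖ ≤ ‖E‖ ^ 2 * ‖B‖ := calc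
  ‖E * B * Eᵀ‖ ≤ ‖E‖ * ‖B‖ * ‖Eᵀ‖ :=
    (l2_opNorm_mul _ _).trans (by gcongr; exact l2_opNorm_mul _ _)
  _ = ‖E‖ ^ 2 * ‖B‖ := by rw [l2_opNorm_transpose]; ring

theorem isUnit_and_l2_opNorm_inv_le {M : Matrix n n ℝ} {κ ε : ℝ} (hκ : 0 < κ) (hε : ε < 1)
    (hM : ‖M - κ • 1‖ ≤ κ * ε) : IsUnit M ∧ ‖M⁻¹‖ ≤ (κ * (1 - ε))⁻¹ := by
  rw [nonsing_inv_eq_ringInverse]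
  exact isUnit_and_norm_inverse_le_of_norm_sub_smul_one_le l2_opNorm_one_le hκ hε hM

end Matrix

/-- The smaller root of `(x - δ) * (1 - x) = θ ^ 2`. -/
noncomputable def schurBound (δ θ : ℝ) : ℝ := (1 + δ) / 2 - √((1 - δ) ^ 2 / 4 - θ ^ 2)

theorem schurBound_lt_one {δ : ℝ} (hδ : δ < 1) (θ : ℝ) : schurBound δ θ < 1 := by
  have := Real.sqrt_nonneg ((1 - δ) ^ 2 / 4 - θ ^ 2)
  unfold schurBound
  linarith

theorem add_sq_div_one_sub_schurBound {δ θ : ℝ} (hδ : δ < 1) (hθ0 : 0 ≤ θ) (hθ : θ ≤ (1 - δ) / 2) :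
    δ + θ ^ 2 / (1 - schurBound δ θ) = schurBound δ θ := by
  have hs := Real.sq_sqrt (show 0 ≤ (1 - δ) ^ 2 / 4 - θ ^ 2 by nlinarith)
  have h1 : 0 < 1 - schurBound δ θ := sub_pos.2 (schurBound_lt_one hδ θ)
  rw [← eq_sub_iff_add_eq', div_eq_iff h1.ne']
  unfold schurBound
  linear_combination hs

theorem l2_opNorm_schur_sub_smul_one_le {m n : Type*} [Fintype m] [Fintype n] [DecidableEq m]
    [DecidableEq n] {κ δ θ ε : ℝ} (hκ : 0 < κ) (hε : ε < 1) (hfix : δ + θ ^ 2 / (1 - ε) ≤ ε)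
    {D : Matrix m m ℝ} {E : Matrix m n ℝ} {Q : Matrix n n ℝ} (hD : ‖D - κ • 1‖ ≤ κ * δ)
    (hE : ‖E‖ ≤ κ * θ) (hQ : ‖Q - κ • 1‖ ≤ κ * ε) :
    ‖D - E * Q⁻¹ * Eᵀ - κ • 1‖ ≤ κ * ε := by
  have hQinv := (Matrix.isUnit_and_l2_opNorm_inv_le hκ hε hQ).2
  have h1ε : 0 < 1 - ε := sub_pos.2 hε
  calc ‖D - E * Q⁻¹ * Eᵀ - κ • 1‖ = ‖(D - κ • 1) - E * Q⁻¹ * Eᵀ‖ := by rw [sub_right_comm]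
    _ ≤ ‖D - κ • 1‖ + ‖E‖ ^ 2 * ‖Q⁻¹‖ :=
      (norm_sub_le _ _).trans (by gcongr; exact Matrix.l2_opNorm_mul_mul_transpose_le _ _)
    _ ≤ κ * δ + (κ * θ) ^ 2 * (κ * (1 - ε))⁻¹ := by gcongr
    _ = κ * (δ + θ ^ 2 / (1 - ε)) := by field_simp
    _ ≤ κ * ε := by gcongr

theorem l2_opNorm_Qrec_sub_smul_one_le {N : ℕ} {D E : ℕ → Matrix (Fin N) (Fin N) ℝ}
    {κ δ θ ε : ℝ} (hκ : 0 < κ) (hε : ε < 1) (hfix : δ + θ ^ 2 / (1 - ε) ≤ ε)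
    (hD : ∀ k, ‖D k - κ • 1‖ ≤ κ * δ) (hE : ∀ k, ‖E k‖ ≤ κ * θ) (k : ℕ) :
    ‖Qrec D E k - κ • 1‖ ≤ κ * ε := by
  induction k with
  | zero =>
    have hδε : δ ≤ ε := by
      have := div_nonneg (sq_nonneg θ) (sub_pos.2 hε).le
      linarith
    exact (hD 0).trans (by gcongr)
  | succ k ih => exact l2_opNorm_schur_sub_smul_one_le hκ hε hfix (hD _) (hE k) ih

theorem Q_conditioning_general (N : ℕ)
    (D E : ℕ → Matrix (Fin N) (Fin N) ℝ)
    (κ δ θ : ℝ) (hκ : 1 ≤ κ) (hδ1 : δ < 1)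
    (hθ0 : 0 ≤ θ) (hθ : θ ≤ (1 - δ) / 2)
    (hD : ∀ k, matSpectralNorm (D k - κ • (1 : Matrix (Fin N) (Fin N) ℝ)) ≤ κ * δ)
    (hE : ∀ k, matSpectralNorm (E k) ≤ κ * θ)
    (ε : ℝ) (hε : ε = (1 + δ) / 2 - Real.sqrt ((1 - δ) ^ 2 / 4 - θ ^ 2)) :
    ε < 1 ∧ ∀ k, IsUnit (Qrec D E k) ∧
      matSpectralNorm (Qrec D E k - κ • (1 : Matrix (Fin N) (Fin N) ℝ)) ≤ κ * ε := by
  simp only [matSpectralNorm_eq_l2_opNorm] at hD hE ⊢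
  change ε = schurBound δ θ at hε
  subst hε
  have hκ0 : 0 < κ := by linarith
  have hε1 := schurBound_lt_one hδ1 θ
  have hQ := l2_opNorm_Qrec_sub_smul_one_le hκ0 hε1 (add_sq_div_one_sub_schurBound hδ1 hθ0 hθ).le hD hE
  exact ⟨hε1, fun k => ⟨(Matrix.isUnit_and_l2_opNorm_inv_le hκ0 hε1 (hQ k)).1, hQ k⟩⟩

/-- if `‖D_k − κI‖ ≤ κδ` and `‖E_k‖ ≤ κθ` with `κ ≥ 1`, `δ ∈ [0,1)`,
`θ ∈ [0,(1−δ)/2]`, then every `Q_k` is invertible and `‖Q_k − κI‖ ≤ κε` with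
`ε = (1+δ)/2 − √((1−δ)²/4 − θ²) < 1`. -/
theorem Q_conditioning (N : ℕ) (hN : 1 ≤ N)
    (D E : ℕ → Matrix (Fin N) (Fin N) ℝ) (hDsym : ∀ k, (D k)ᵀ = D k)
    (κ δ θ : ℝ) (hκ : 1 ≤ κ) (hδ0 : 0 ≤ δ) (hδ1 : δ < 1)
    (hθ0 : 0 ≤ θ) (hθ : θ ≤ (1 - δ) / 2)
    (hD : ∀ k, matSpectralNorm (D k - κ • (1 : Matrix (Fin N) (Fin N) ℝ)) ≤ κ * δ)
    (hE : ∀ k, matSpectralNorm (E k) ≤ κ * θ)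
    (ε : ℝ) (hε : ε = (1 + δ) / 2 - Real.sqrt ((1 - δ) ^ 2 / 4 - θ ^ 2)) :
    ε < 1 ∧ ∀ k, IsUnit (Qrec D E k) ∧
      matSpectralNorm (Qrec D E k - κ • (1 : Matrix (Fin N) (Fin N) ℝ)) ≤ κ * ε :=
  Q_conditioning_general N D E κ δ θ hκ hδ1 hθ0 hθ hD hE ε hε
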